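/- Let m ≥ 1, let M ≥ 2 be an integer, let h₀ > 0 and 0 < h ≤ 1, and let g : {0,…,m−1} → ℝ satisfy |g(t)| ≤ h₀ hᵗ for all t. Set ε = π h₀ · (Σ_{t=0}^{m−1} hᵗ) · (m−1)/(2M) and let r > 0. Define f_r(θ) = Σ_{t=0}^{m−1} g(t) cos(tθ) and f_i(θ) = Σ_{t=0}^{m−1} g(t) sin(tθ). Suppose that for every integer m' ∈ {0,…,M}: −r + ε < f_r(m'π/M) < r − ε and −r + ε < f_i(m'π/M) < r − ε. Then for every θ ∈ ℝ, |Σ_{t=0}^{m−1} g(t) e^{−iθt}| < √2 · r. -/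

import Mathlib

/-!
Both `f_r` and `f_i` are Lipschitz with constant `Σ |g t| t ≤ (m - 1) h₀ Σ hᵗ`, and every point
of `[0, π]` lies within `π / (2M)` of a sample `m'π/M`; the margin `ε` is exactly what this
Lipschitz bound costs, so `|f_r|, |f_i| < r` on `[0, π]`. Since `f_r` is even, `f_i` is odd and
both are `2π`-periodic, this holds on all of `ℝ`, and a complex number whose real and imaginary
parts are below `r` in absolute value has norm below `√2 r`.
-/

open Real Finset Set

noncomputable section

variable (g : ℕ → ℝ) (m : ℕ)

def cosSum (θ : ℝ) : ℝ := ∑ t ∈ range m, g t * cos (t * θ)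

def sinSum (θ : ℝ) : ℝ := ∑ t ∈ range m, g t * sin (t * θ)

def firResponse (θ : ℝ) : ℂ := ∑ t ∈ range m, (g t : ℂ) * Complex.exp (-(Complex.I * (θ * t)))

lemma firResponse_re (θ : ℝ) : (firResponse g m θ).re = cosSum g m θ := by
  simp [firResponse, cosSum, Complex.exp_re, mul_comm]

lemma firResponse_im (θ : ℝ) : (firResponse g m θ).im = -sinSum g m θ := by
  simp [firResponse, sinSum, Complex.exp_im, mul_comm]

lemma cosSum_periodic : Function.Periodic (cosSum g m) (2 * π) := fun θ => by
  simp only [cosSum, mul_add, cos_add_nat_mul_two_pi]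

lemma sinSum_periodic : Function.Periodic (sinSum g m) (2 * π) := fun θ => by
  simp only [sinSum, mul_add, sin_add_nat_mul_two_pi]

lemma cosSum_neg (θ : ℝ) : cosSum g m (-θ) = cosSum g m θ := by
  simp only [cosSum, mul_neg, cos_neg]

lemma sinSum_neg (θ : ℝ) : sinSum g m (-θ) = -sinSum g m θ := by
  simp only [sinSum, mul_neg, sin_neg, ← sum_neg_distrib]

lemma exists_mem_Icc_abs_cosSum_eq_abs_sinSum_eq (θ : ℝ) :
    ∃ y ∈ Icc 0 π, |cosSum g m θ| = |cosSum g m y| ∧ |sinSum g m θ| = |sinSum g m y| := by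
  -- `θ = 2kπ ± arccos (cos θ)` for some integer `k`.
  refine ⟨arccos (cos θ), ⟨arccos_nonneg _, arccos_le_pi _⟩, ?_⟩
  have hcos : cos (arccos (cos θ)) = cos θ := cos_arccos (neg_one_le_cos θ) (cos_le_one θ)
  generalize arccos (cos θ) = y at hcos ⊢
  obtain ⟨k, rfl | rfl⟩ := cos_eq_cos_iff.mp hcos
  · rw [mul_comm (2 : ℝ), mul_assoc, add_comm, (cosSum_periodic g m).int_mul k,
      (sinSum_periodic g m).int_mul k]
    exact ⟨rfl, rfl⟩
  · rw [mul_comm (2 : ℝ), mul_assoc, (cosSum_periodic g m).int_mul_sub_eq,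
      (sinSum_periodic g m).int_mul_sub_eq, cosSum_neg, sinSum_neg, abs_neg]
    exact ⟨rfl, rfl⟩

lemma abs_sum_mul_comp_sub_le {c : ℝ → ℝ} (hc : ∀ x y, |c x - c y| ≤ |x - y|) (a b : ℝ) :
    |∑ t ∈ range m, g t * c (t * a) - ∑ t ∈ range m, g t * c (t * b)| ≤
      (∑ t ∈ range m, |g t| * t) * |a - b| := by
  rw [← sum_sub_distrib, sum_mul]
  refine (abs_sum_le_sum_abs _ _).trans (sum_le_sum fun t _ => ?_)
  calc |g t * c (t * a) - g t * c (t * b)| = |g t| * |c (t * a) - c (t * b)| := by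
        rw [← mul_sub, abs_mul]
    _ ≤ |g t| * |t * a - t * b| := mul_le_mul_of_nonneg_left (hc _ _) (abs_nonneg _)
    _ = |g t| * t * |a - b| := by rw [← mul_sub, abs_mul, Nat.abs_cast, mul_assoc]

lemma abs_cosSum_sub_le (a b : ℝ) :
    |cosSum g m a - cosSum g m b| ≤ (∑ t ∈ range m, |g t| * t) * |a - b| :=
  abs_sum_mul_comp_sub_le g m abs_cos_sub_cos_le a b

lemma abs_sinSum_sub_le (a b : ℝ) :
    |sinSum g m a - sinSum g m b| ≤ (∑ t ∈ range m, |g t| * t) * |a - b| :=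
  abs_sum_mul_comp_sub_le g m abs_sin_sub_sin_le a b

lemma sum_abs_mul_le {w : ℕ → ℝ} (hg : ∀ t < m, |g t| ≤ w t) :
    ∑ t ∈ range m, |g t| * t ≤ ((m : ℝ) - 1) * ∑ t ∈ range m, w t := by
  rw [mul_sum]
  refine sum_le_sum fun t ht => ?_
  have ht : t < m := mem_range.mp ht
  have ht' : (t : ℝ) ≤ m - 1 := by
    rw [le_sub_iff_add_le]; exact_mod_cast ht
  rw [mul_comm]
  exact mul_le_mul ht' (hg t ht) (abs_nonneg _) ((Nat.cast_nonneg t).trans ht')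

end

lemma exists_nat_le_abs_sub_le_half {x : ℝ} {N : ℕ} (hx₀ : 0 ≤ x) (hxN : x ≤ N) :
    ∃ k ≤ N, |x - k| ≤ 1 / 2 := by
  have hx : 0 ≤ x + 1 / 2 := by linarith
  have hlo := Nat.floor_le hx
  have hhi := Nat.lt_floor_add_one (x + 1 / 2)
  have hkN : (⌊x + 1 / 2⌋₊ : ℝ) < N + 1 := by linarith
  exact ⟨_, Nat.lt_add_one_iff.mp (by exact_mod_cast hkN), abs_le.mpr ⟨by linarith, by linarith⟩⟩

lemma exists_nat_le_abs_sub_grid_le {L y : ℝ} {N : ℕ} (hN : 0 < N) (hL : 0 < L)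
    (hy : y ∈ Icc 0 L) : ∃ k ≤ N, |y - k * L / N| ≤ L / (2 * N) := by
  have hN' : (0 : ℝ) < N := by exact_mod_cast hN
  obtain ⟨k, hkN, hk⟩ := exists_nat_le_abs_sub_le_half (x := y * N / L) (N := N)
    (by have := hy.1; positivity) (by rw [div_le_iff₀ hL]; nlinarith [hy.2])
  refine ⟨k, hkN, ?_⟩
  have hscale : y - k * L / N = (y * N / L - k) * (L / N) := by field_simp
  rw [hscale, abs_mul, abs_of_pos (div_pos hL hN')]
  calc |y * N / L - k| * (L / N) ≤ 1 / 2 * (L / N) := by gcongr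
    _ = L / (2 * N) := by ring

lemma abs_lt_of_abs_lt_on_grid {f : ℝ → ℝ} {K L r : ℝ} {N : ℕ} (hN : 0 < N) (hL : 0 < L)
    (hK : 0 ≤ K) (hf : ∀ a b, |f a - f b| ≤ K * |a - b|)
    (hgrid : ∀ k ≤ N, |f (k * L / N)| < r - K * (L / (2 * N))) {y : ℝ} (hy : y ∈ Icc 0 L) :
    |f y| < r := by
  obtain ⟨k, hkN, hk⟩ := exists_nat_le_abs_sub_grid_le hN hL hy
  have hnear : |f y - f (k * L / N)| ≤ K * (L / (2 * N)) :=
    (hf _ _).trans (mul_le_mul_of_nonneg_left hk hK)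
  linarith [abs_sub_abs_le_abs_sub (f y) (f (k * L / N)), hgrid k hkN]

theorem stmt16_general (m M : ℕ) (hM : 2 ≤ M) (h₀ h : ℝ)
    (g : ℕ → ℝ) (hg : ∀ t < m, |g t| ≤ h₀ * h ^ t)
    (r : ℝ)
    (hbox : ∀ m' : ℕ, m' ≤ M →
      (-r + Real.pi * h₀ * (∑ t ∈ Finset.range m, h ^ t) * ((m : ℝ) - 1) / (2 * M) <
        ∑ t ∈ Finset.range m, g t * Real.cos (t * ((m' : ℝ) * Real.pi / M))) ∧
      ((∑ t ∈ Finset.range m, g t * Real.cos (t * ((m' : ℝ) * Real.pi / M))) <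
        r - Real.pi * h₀ * (∑ t ∈ Finset.range m, h ^ t) * ((m : ℝ) - 1) / (2 * M)) ∧
      (-r + Real.pi * h₀ * (∑ t ∈ Finset.range m, h ^ t) * ((m : ℝ) - 1) / (2 * M) <
        ∑ t ∈ Finset.range m, g t * Real.sin (t * ((m' : ℝ) * Real.pi / M))) ∧
      ((∑ t ∈ Finset.range m, g t * Real.sin (t * ((m' : ℝ) * Real.pi / M))) <
        r - Real.pi * h₀ * (∑ t ∈ Finset.range m, h ^ t) * ((m : ℝ) - 1) / (2 * M))) :
    ∀ θ : ℝ,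
      ‖∑ t ∈ Finset.range m, (g t : ℂ) * Complex.exp (-(Complex.I * (θ * t)))‖ <
        Real.sqrt 2 * r := by
  intro θ
  set K := ∑ t ∈ range m, |g t| * t
  have hM₀ : 0 < M := by omega
  have hmargin : K * (π / (2 * M)) ≤
      π * h₀ * (∑ t ∈ range m, h ^ t) * ((m : ℝ) - 1) / (2 * M) := by
    have hK := sum_abs_mul_le g m hg
    rw [← mul_sum] at hK
    calc K * (π / (2 * M)) ≤ (m - 1) * (h₀ * ∑ t ∈ range m, h ^ t) * (π / (2 * M)) := by
          gcongr
      _ = _ := by ring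
  have hK : 0 ≤ K := by positivity
  have hcos : ∀ y ∈ Icc 0 π, |cosSum g m y| < r := fun y hy =>
    abs_lt_of_abs_lt_on_grid hM₀ pi_pos hK (abs_cosSum_sub_le g m) (fun k hk =>
      abs_lt.mpr ⟨by unfold cosSum; linarith [(hbox k hk).1],
        by unfold cosSum; linarith [(hbox k hk).2.1]⟩) hy
  have hsin : ∀ y ∈ Icc 0 π, |sinSum g m y| < r := fun y hy =>
    abs_lt_of_abs_lt_on_grid hM₀ pi_pos hK (abs_sinSum_sub_le g m) (fun k hk =>
      abs_lt.mpr ⟨by unfold sinSum; linarith [(hbox k hk).2.2.1],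
        by unfold sinSum; linarith [(hbox k hk).2.2.2]⟩) hy
  obtain ⟨y, hy, hcos_eq, hsin_eq⟩ := exists_mem_Icc_abs_cosSum_eq_abs_sinSum_eq g m θ
  calc ‖firResponse g m θ‖ ≤ √2 * max |(firResponse g m θ).re| |(firResponse g m θ).im| :=
        Complex.norm_le_sqrt_two_mul_max _
    _ < √2 * r := by
        rw [firResponse_re, firResponse_im, abs_neg, hcos_eq, hsin_eq]
        gcongr
        exact max_lt (hcos y hy) (hsin y hy)

/-- Theorem 3, Case C (frequency-domain content): sampled box constraints on
`f_r` and `f_i`, tightened by `ε`, together with the decay constraint, force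
the entire Nyquist locus of the FIR filter into the open disk of radius `√2·r`
centred at the origin. -/
theorem stmt16 (m M : ℕ) (hm : 1 ≤ m) (hM : 2 ≤ M) (h₀ h : ℝ)
    (hh₀ : 0 < h₀) (hh : 0 < h) (hh1 : h ≤ 1)
    (g : ℕ → ℝ) (hg : ∀ t < m, |g t| ≤ h₀ * h ^ t)
    (r : ℝ) (hr : 0 < r)
    (hbox : ∀ m' : ℕ, m' ≤ M →
      (-r + Real.pi * h₀ * (∑ t ∈ Finset.range m, h ^ t) * ((m : ℝ) - 1) / (2 * M) <
        ∑ t ∈ Finset.range m, g t * Real.cos (t * ((m' : ℝ) * Real.pi / M))) ∧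
      ((∑ t ∈ Finset.range m, g t * Real.cos (t * ((m' : ℝ) * Real.pi / M))) <
        r - Real.pi * h₀ * (∑ t ∈ Finset.range m, h ^ t) * ((m : ℝ) - 1) / (2 * M)) ∧
      (-r + Real.pi * h₀ * (∑ t ∈ Finset.range m, h ^ t) * ((m : ℝ) - 1) / (2 * M) <
        ∑ t ∈ Finset.range m, g t * Real.sin (t * ((m' : ℝ) * Real.pi / M))) ∧
      ((∑ t ∈ Finset.range m, g t * Real.sin (t * ((m' : ℝ) * Real.pi / M))) <
        r - Real.pi * h₀ * (∑ t ∈ Finset.range m, h ^ t) * ((m : ℝ) - 1) / (2 * M))) :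
    ∀ θ : ℝ,
      ‖∑ t ∈ Finset.range m, (g t : ℂ) * Complex.exp (-(Complex.I * (θ * t)))‖ <
        Real.sqrt 2 * r :=
  stmt16_general m M hM h₀ h g hg r hbox
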